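/- For all integers k ≥ 2 and n ≥ 1, Φ(k,n) equals the number of finite multisets of isomorphism classes of fission chains of slope ≤ k−1 whose total number of leaves (summed with multiplicity over the multiset) is n. In other words, for each fixed k the sequence Φ(k,·) is the Euler transform of the sequence Φ(k−1,·). -/

import Mathlib

/-- A fission chain of slope `≤ k` with `n` leaves: a chain of surjective maps of
finite sets `J₁ ↠ J₂ ↠ ⋯ ↠ J_{k+1}` with `|J₁| = n` and `|J_{k+1}| = 1`.
We encode `J_{i+1} := Fin (size i)`; the chain is prolonged trivially above
height `k+1` (all later sets necessarily also have one element, since all the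
maps are surjective). -/
structure FChain (k n : ℕ) where
  size : ℕ → ℕ
  map : ∀ i, Fin (size i) → Fin (size (i+1))
  surj : ∀ i, Function.Surjective (map i)
  size_zero : size 0 = n
  size_top : size k = 1

/-- A fission chain of slope `≤ k` has slope exactly `k` if `k = 0` or `|J_k| ≥ 2`
(here `J_k = Fin (size (k-1))`). -/
def FChain.ExactSlope {k n : ℕ} (c : FChain k n) : Prop :=
  k = 0 ∨ 2 ≤ c.size (k - 1)

/-- Isomorphism of fission chains: bijections between the corresponding sets
commuting with all the maps. -/
def FChain.Iso {k n m : ℕ} (c : FChain k n) (d : FChain k m) : Prop :=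
  ∃ e : ∀ i, Fin (c.size i) ≃ Fin (d.size i),
    ∀ i x, e (i+1) (c.map i x) = d.map i (e i x)

/-- `Φ(k,n)`: the number of isomorphism classes of fission chains of slope `≤ k`
with `n` leaves. -/
noncomputable def PhiBig (k n : ℕ) : ℕ :=
  Nat.card (Quot (fun c d : FChain k n => c.Iso d))

/-- `φ(k,n)`: the number of isomorphism classes of fission chains of slope
exactly `k` with `n` leaves. -/
noncomputable def phi (k n : ℕ) : ℕ :=
  Nat.card (Quot (fun c d : {c : FChain k n // c.ExactSlope} => c.1.Iso d.1))

/-- The isomorphism relation on fission chains of slope `≤ k` with arbitrary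
numbers of leaves. -/
def ChainRel (k : ℕ) (c d : Σ m : ℕ, FChain k m) : Prop := c.2.Iso d.2

/-- The number of leaves of an isomorphism class of fission chains of slope `≤ k`
(well defined since isomorphic chains have the same number of leaves). -/
noncomputable def leafCount (k : ℕ) : Quot (ChainRel k) → ℕ :=
  Quot.lift (fun c => c.1) (by
    rintro ⟨m, c⟩ ⟨m', d⟩ ⟨e, -⟩
    have h : c.size 0 = d.size 0 := Fin.equiv_iff_eq.mp ⟨e 0⟩
    rw [c.size_zero, d.size_zero] at h
    exact h)

open Function

namespace FChain

variable {k n m p : ℕ}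

lemma size_pos_of_succ_pos (c : FChain k n) {i : ℕ} (h : 0 < c.size (i+1)) :
    0 < c.size i := by
  obtain ⟨x, -⟩ := c.surj i ⟨0, h⟩
  exact x.pos

lemma size_of_ge (c : FChain k n) : ∀ {i}, k ≤ i → c.size i = 1 := by
  intro i hi
  obtain ⟨j, rfl⟩ := Nat.exists_eq_add_of_le hi
  induction j with
  | zero => exact c.size_top
  | succ j ih =>
    have h1 : c.size (k + j) = 1 := ih (Nat.le_add_right _ _)
    have hne : Nonempty (Fin (c.size (k + j + 1))) := ⟨c.map (k+j) ⟨0, h1 ▸ Nat.one_pos⟩⟩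
    have hle : c.size (k + j + 1) ≤ 1 := by
      have := Fintype.card_le_of_surjective _ (c.surj (k+j))
      simpa [h1] using this
    obtain ⟨x⟩ := hne
    have hp := x.pos
    show c.size (k + j + 1) = 1
    omega

lemma size_pos (c : FChain k n) (i : ℕ) : 0 < c.size i := by
  rcases le_or_gt k i with h | h
  · rw [c.size_of_ge h]; omega
  · suffices key : ∀ d j, j + d = k → 0 < c.size j by
      exact key (k - i) i (by omega)
    intro d
    induction d with
    | zero =>
      intro j hj; subst hj
      have h1 := c.size_top
      simp only [Nat.add_zero] at h1
      omega
    | succ d ih =>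
      intro j hj
      exact c.size_pos_of_succ_pos (ih (j+1) (by omega))

lemma iso_refl (c : FChain k n) : c.Iso c := ⟨fun _ => Equiv.refl _, fun _ _ => rfl⟩

lemma Iso.symm {c : FChain k n} {d : FChain k m} (h : c.Iso d) : d.Iso c := by
  obtain ⟨e, he⟩ := h
  refine ⟨fun i => (e i).symm, fun i x => ?_⟩
  apply (e (i+1)).injective
  rw [Equiv.apply_symm_apply, he, Equiv.apply_symm_apply]

lemma Iso.trans {c : FChain k n} {d : FChain k m} {f : FChain k p}
    (h : c.Iso d) (h' : d.Iso f) : c.Iso f := by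
  obtain ⟨e, he⟩ := h; obtain ⟨e', he'⟩ := h'
  exact ⟨fun i => (e i).trans (e' i), fun i x => by simp [he, he']⟩

end FChain

/-! ### Generic iterated projection -/

variable {S S' : ℕ → Sort*}

noncomputable def tproj (f : ∀ i, S i → S (i+1)) (T : ℕ) (ne : Nonempty (S T)) : ∀ i, S i → S T
  | i, x =>
    if h : i < T then tproj f T ne (i+1) (f i x)
    else if h2 : i = T then h2 ▸ x else Classical.choice ne
termination_by i => T - i

lemma tproj_lt (f : ∀ i, S i → S (i+1)) {T : ℕ} (ne : Nonempty (S T)) {i : ℕ}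
    (h : i < T) (x : S i) : tproj f T ne i x = tproj f T ne (i+1) (f i x) := by
  conv_lhs => rw [tproj]
  simp [h]

lemma tproj_self (f : ∀ i, S i → S (i+1)) {T : ℕ} (ne : Nonempty (S T)) (x : S T) :
    tproj f T ne T x = x := by
  rw [tproj]
  simp

lemma tproj_nat (f : ∀ i, S i → S (i+1)) (f' : ∀ i, S' i → S' (i+1))
    (φ : ∀ i, S i → S' i) (hφ : ∀ i x, φ (i+1) (f i x) = f' i (φ i x))
    {T : ℕ} (ne : Nonempty (S T)) (ne' : Nonempty (S' T)) :
    ∀ i, i ≤ T → ∀ x, φ T (tproj f T ne i x) = tproj f' T ne' i (φ i x) := by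
  suffices h : ∀ d i, i + d = T → ∀ x, φ T (tproj f T ne i x) = tproj f' T ne' i (φ i x) by
    intro i hi x; exact h (T - i) i (by omega) x
  intro d
  induction d with
  | zero =>
    intro i hi x
    simp only [Nat.add_zero] at hi; subst hi
    rw [tproj_self, tproj_self]
  | succ d ih =>
    intro i hi x
    rw [tproj_lt f ne (by omega), tproj_lt f' ne' (by omega), ← hφ]
    exact ih (i+1) (by omega) _

lemma tproj_surj (f : ∀ i, S i → S (i+1)) (hf : ∀ i, Surjective (f i))
    {T : ℕ} (ne : Nonempty (S T)) :
    ∀ i, i ≤ T → Surjective (tproj f T ne i) := by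
  suffices h : ∀ d i, i + d = T → Surjective (tproj f T ne i) by
    intro i hi; exact h (T - i) i (by omega)
  intro d
  induction d with
  | zero =>
    intro i hi
    simp only [Nat.add_zero] at hi; subst hi
    intro y; exact ⟨y, tproj_self f ne y⟩
  | succ d ih =>
    intro i hi y
    obtain ⟨z, hz⟩ := ih (i+1) (by omega) y
    obtain ⟨x, hx⟩ := hf i z
    exact ⟨x, by rw [tproj_lt f ne (by omega), hx, hz]⟩

/-- Iterated projection in a fission chain. -/
noncomputable def FChain.proj {k n : ℕ} (c : FChain k n) (T i : ℕ) : Fin (c.size i) → Fin (c.size T) :=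
  tproj c.map T ⟨⟨0, c.size_pos T⟩⟩ i

lemma FChain.proj_lt {k n : ℕ} (c : FChain k n) {T i : ℕ} (h : i < T) (x : Fin (c.size i)) :
    c.proj T i x = c.proj T (i+1) (c.map i x) := tproj_lt c.map _ h x

lemma FChain.proj_self {k n : ℕ} (c : FChain k n) {T : ℕ} (x : Fin (c.size T)) :
    c.proj T T x = x := tproj_self c.map _ x

/-! ### Building a chain from type-level data -/

noncomputable def ofTypes {l n : ℕ} (S : ℕ → Type) (inst : ∀ i, Fintype (S i))
    (f : ∀ i, S i → S (i+1)) (hf : ∀ i, Surjective (f i))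
    (h0 : @Fintype.card (S 0) (inst 0) = n) (ht : @Fintype.card (S l) (inst l) = 1) :
    FChain l n :=
  letI := inst
  { size := fun i => Fintype.card (S i)
    map := fun i x => Fintype.equivFin _ (f i ((Fintype.equivFin _).symm x))
    surj := fun i => (Fintype.equivFin _).surjective.comp ((hf i).comp (Equiv.surjective _))
    size_zero := h0
    size_top := ht }

lemma ofTypes_iso {l n m : ℕ} (S : ℕ → Type) (inst : ∀ i, Fintype (S i))
    (f : ∀ i, S i → S (i+1)) (hf : ∀ i, Surjective (f i))
    (h0 : @Fintype.card (S 0) (inst 0) = n) (ht : @Fintype.card (S l) (inst l) = 1)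
    (c : FChain l m) (ψ : ∀ i, S i ≃ Fin (c.size i))
    (hψ : ∀ i x, ψ (i+1) (f i x) = c.map i (ψ i x)) :
    (ofTypes S inst f hf h0 ht).Iso c := by
  letI := inst
  refine ⟨fun i => (Fintype.equivFin (S i)).symm.trans (ψ i), fun i x => ?_⟩
  show ψ (i+1) ((Fintype.equivFin (S (i+1))).symm (Fintype.equivFin (S (i+1))
    (f i ((Fintype.equivFin (S i)).symm x)))) = c.map i (ψ i ((Fintype.equivFin (S i)).symm x))
  rw [Equiv.symm_apply_apply, hψ]


/-! ### Relations -/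

lemma chainRel_equivalence (k : ℕ) : Equivalence (ChainRel k) :=
  ⟨fun c => c.2.iso_refl, fun h => h.symm, fun h h' => h.trans h'⟩

lemma chainRel_mk_eq_iff {k : ℕ} {a b : Σ m : ℕ, FChain k m} :
    Quot.mk (ChainRel k) a = Quot.mk (ChainRel k) b ↔ ChainRel k a b :=
  Quot.eq.trans ((chainRel_equivalence k).eqvGen_iff)

/-! ### Fibers -/

section Fiber

variable {l n : ℕ} (c : FChain (l+1) n) (j : Fin (c.size l))

/-- The fiber over `j` at level `i` (trivial above level `l`). -/
def Fb (i : ℕ) : Type := {x : Fin (c.size i) // i ≤ l → c.proj l i x = j}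

noncomputable instance (i : ℕ) : Fintype (Fb c j i) := by
  unfold Fb; exact Fintype.ofFinite _

lemma fb_subsingleton {i : ℕ} (h : l < i) : Subsingleton (Fb c j i) := by
  have h1 : c.size i = 1 := c.size_of_ge h
  constructor
  rintro ⟨x, -⟩ ⟨y, -⟩
  have : Subsingleton (Fin (c.size i)) := by rw [h1]; infer_instance
  exact Subtype.ext (Subsingleton.elim x y)

def fbTop : Fb c j l := ⟨j, fun _ => c.proj_self j⟩

lemma card_fb_top : Fintype.card (Fb c j l) = 1 := by
  rw [Fintype.card_eq_one_iff]
  refine ⟨fbTop c j, ?_⟩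
  rintro ⟨x, hx⟩
  refine Subtype.ext ?_
  have h := hx le_rfl
  rwa [c.proj_self] at h

def fbMap (i : ℕ) : Fb c j i → Fb c j (i+1) :=
  fun x => ⟨c.map i x.1, fun h => by
    have h' : i < l := h
    rw [← c.proj_lt h']
    exact x.2 h'.le⟩

lemma fbMap_surj (i : ℕ) : Surjective (fbMap c j i) := by
  rintro ⟨y, hy⟩
  rcases le_or_gt (i+1) l with h | h
  · obtain ⟨x, hx⟩ := c.surj i y
    refine ⟨⟨x, fun h2 => ?_⟩, Subtype.ext hx⟩
    rw [c.proj_lt (by omega : i < l), hx]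
    exact hy h
  · have hsub : Subsingleton (Fin (c.size (i+1))) := by
      rw [c.size_of_ge (by omega : l + 1 ≤ i + 1)]; infer_instance
    rcases eq_or_lt_of_le (show l ≤ i by omega) with h2 | h2
    · subst h2
      exact ⟨fbTop c j, Subtype.ext (Subsingleton.elim _ _)⟩
    · exact ⟨⟨⟨0, c.size_pos i⟩, fun hle => absurd hle (by omega)⟩,
        Subtype.ext (Subsingleton.elim _ _)⟩

noncomputable def fiberChain : FChain l (Fintype.card (Fb c j 0)) :=
  ofTypes (Fb c j) _ (fbMap c j) (fbMap_surj c j) rfl (card_fb_top c j)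

/-- The multiset of fiber classes of a chain. -/
noncomputable def Fc : Multiset (Quot (ChainRel l)) :=
  Multiset.map (fun j => Quot.mk _ ⟨_, fiberChain c j⟩) Finset.univ.val

lemma card_fb_zero (j : Fin (c.size l)) :
    Fintype.card (Fb c j 0) = Fintype.card {x : Fin (c.size 0) // c.proj l 0 x = j} := by
  apply Fintype.card_congr
  exact Equiv.subtypeEquivRight (fun x => ⟨fun h => h (Nat.zero_le l), fun h _ => h⟩)

lemma sum_card_fb : ∑ j : Fin (c.size l), Fintype.card (Fb c j 0) = n := by
  have h1 : ∑ j : Fin (c.size l), Fintype.card (Fb c j 0)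
      = ∑ j : Fin (c.size l), Fintype.card {x : Fin (c.size 0) // c.proj l 0 x = j} :=
    Finset.sum_congr rfl (fun j _ => card_fb_zero c j)
  rw [h1, ← Fintype.card_sigma, Fintype.card_congr (Equiv.sigmaFiberEquiv (c.proj l 0)),
    Fintype.card_fin, c.size_zero]

lemma Fc_sum : ((Fc c).map (leafCount l)).sum = n := by
  rw [Fc, Multiset.map_map]
  have : ((Finset.univ.val : Multiset (Fin (c.size l))).map
      (leafCount l ∘ fun j => Quot.mk _ ⟨_, fiberChain c j⟩)).sum
      = ∑ j : Fin (c.size l), Fintype.card (Fb c j 0) := rfl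
  rw [this, sum_card_fb]

end Fiber


lemma fiber_iso_of_iso {l n n' : ℕ} (c : FChain (l+1) n) (c' : FChain (l+1) n')
    (e : ∀ i, Fin (c.size i) ≃ Fin (c'.size i))
    (he : ∀ i x, e (i+1) (c.map i x) = c'.map i (e i x)) (j : Fin (c.size l)) :
    (fiberChain c j).Iso (fiberChain c' (e l j)) := by
  have hproj : ∀ i, i ≤ l → ∀ x, e l (c.proj l i x) = c'.proj l i (e i x) :=
    tproj_nat c.map c'.map (fun i => e i) he _ _
  let Φ : ∀ i, Fb c j i ≃ Fb c' (e l j) i := fun i =>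
    Equiv.subtypeEquiv (e i) (fun x => by
      constructor
      · intro hx h; rw [← hproj i h, hx h]
      · intro hx h
        have h2 := hx h
        rw [← hproj i h] at h2
        exact (e l).injective h2)
  refine ofTypes_iso _ _ _ _ _ _ _ (fun i => (Φ i).trans (Fintype.equivFin _)) (fun i x => ?_)
  show Fintype.equivFin _ (Φ (i+1) (fbMap c j i x)) = (fiberChain c' (e l j)).map i _
  simp only [fiberChain, ofTypes, Equiv.trans_apply, Equiv.symm_apply_apply]
  congr 1
  refine Subtype.ext ?_
  show e (i+1) (c.map i x.1) = c'.map i (((Fintype.equivFin (Fb c' (e l j) i)).symm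
    (Fintype.equivFin (Fb c' (e l j) i) (Φ i x))).1)
  rw [Equiv.symm_apply_apply, he]
  rfl

lemma Fc_iso_invariant {l n : ℕ} {c c' : FChain (l+1) n} (h : c.Iso c') : Fc c = Fc c' := by
  obtain ⟨e, he⟩ := h
  have key : ∀ j, Quot.mk (ChainRel l) (⟨_, fiberChain c j⟩ : Σ m, FChain l m)
      = Quot.mk _ ⟨_, fiberChain c' (e l j)⟩ :=
    fun j => Quot.sound (fiber_iso_of_iso c c' e he j)
  rw [Fc, Fc]
  have h2 : (fun j => Quot.mk (ChainRel l) (⟨_, fiberChain c j⟩ : Σ m, FChain l m))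
      = (fun j => Quot.mk (ChainRel l) ⟨_, fiberChain c' (e l j)⟩) := funext key
  rw [h2]
  have h3 : (Finset.univ.val : Multiset (Fin (c.size l))).map
        (fun j => Quot.mk (ChainRel l) (⟨_, fiberChain c' (e l j)⟩ : Σ m, FChain l m))
      = ((Finset.univ.val : Multiset (Fin (c.size l))).map (e l)).map
        (fun j' => Quot.mk (ChainRel l) ⟨_, fiberChain c' j'⟩) := by
    rw [Multiset.map_map]; rfl
  rw [h3]
  congr 1
  simp


/-! ### Gluing -/

section Glue

variable {l s : ℕ} (d : Fin s → Σ m : ℕ, FChain l m)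

@[reducible] def GT (i : ℕ) : Type := Σ j : Fin s, Fin ((d j).2.size i)

instance (i : ℕ) : Fintype (GT d i) := by unfold GT; infer_instance

def gsetoid (i : ℕ) : Setoid (GT d i) where
  r a b := l < i ∨ a = b
  iseqv := ⟨fun _ => Or.inr rfl,
    fun h => by rcases h with h | rfl; exacts [Or.inl h, Or.inr rfl],
    fun h h' => by rcases h with h | rfl; exacts [Or.inl h, h']⟩

@[reducible] def GQ (i : ℕ) : Type := Quotient (gsetoid d i)

noncomputable instance (i : ℕ) : Fintype (GQ d i) := by
  unfold GQ; exact Fintype.ofFinite _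

def gmapFun (i : ℕ) : GT d i → GT d (i+1) := fun a => ⟨a.1, (d a.1).2.map i a.2⟩

def gmap (i : ℕ) : GQ d i → GQ d (i+1) :=
  Quotient.map (gmapFun d i) (by
    rintro a b (h | rfl)
    · exact Or.inl (by omega)
    · exact Or.inr rfl)

lemma gmap_mk (i : ℕ) (a : GT d i) :
    gmap d i (Quotient.mk _ a) = Quotient.mk _ (gmapFun d i a) := rfl

lemma gmap_surj (i : ℕ) : Surjective (gmap d i) := by
  intro q
  induction q using Quotient.inductionOn with | h b =>
  obtain ⟨j, y⟩ := b
  obtain ⟨x, hx⟩ := (d j).2.surj i y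
  exact ⟨Quotient.mk _ ⟨j, x⟩, by
    rw [gmap_mk]
    exact congrArg _ (congrArg (Sigma.mk j) hx)⟩

def gqEquiv {i : ℕ} (h : i ≤ l) : GQ d i ≃ GT d i where
  toFun := Quotient.lift id (fun a b hab => hab.resolve_left (by omega))
  invFun := Quotient.mk _
  left_inv := by
    intro q
    induction q using Quotient.inductionOn with | h a => rfl
  right_inv := fun a => rfl

lemma gqEquiv_mk {i : ℕ} (h : i ≤ l) (a : GT d i) :
    gqEquiv d h (Quotient.mk _ a) = a := rfl

lemma card_GQ {i : ℕ} (h : i ≤ l) :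
    Fintype.card (GQ d i) = Fintype.card (GT d i) :=
  Fintype.card_congr (gqEquiv d h)

lemma card_GT_zero : Fintype.card (GT d 0) = ∑ j, (d j).1 := by
  show Fintype.card (Σ j : Fin s, Fin ((d j).2.size 0)) = _
  rw [Fintype.card_sigma]
  exact Finset.sum_congr rfl (fun j _ => by rw [Fintype.card_fin, (d j).2.size_zero])

lemma nonempty_GT (hs : 0 < s) (i : ℕ) : Nonempty (GT d i) :=
  ⟨⟨⟨0, hs⟩, ⟨0, FChain.size_pos _ i⟩⟩⟩

lemma card_GQ_top (hs : 0 < s) : Fintype.card (GQ d (l+1)) = 1 := by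
  rw [Fintype.card_eq_one_iff]
  obtain ⟨a⟩ := nonempty_GT d hs (l+1)
  refine ⟨Quotient.mk _ a, ?_⟩
  intro q
  induction q using Quotient.inductionOn with | h b =>
  exact Quotient.sound (Or.inl (by omega))

noncomputable def glue (hs : 0 < s) {n : ℕ} (hn : ∑ j, (d j).1 = n) : FChain (l+1) n :=
  ofTypes (GQ d) (fun _ => inferInstance) (gmap d) (gmap_surj d)
    (by rw [card_GQ d (Nat.zero_le l), card_GT_zero d, hn]) (card_GQ_top d hs)

lemma glue_iso_glue {t : ℕ} (d' : Fin t → Σ m : ℕ, FChain l m)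
    (σ : Fin s ≃ Fin t) (hpt : ∀ j, ChainRel l (d j) (d' (σ j)))
    (hs : 0 < s) (hs' : 0 < t) {n : ℕ} (hn : ∑ j, (d j).1 = n) (hn' : ∑ j, (d' j).1 = n) :
    (glue d hs hn).Iso (glue d' hs' hn') := by
  choose E hE using fun j => (hpt j)
  let B : ∀ i, GT d i ≃ GT d' i := fun i => Equiv.sigmaCongr σ (fun j => E j i)
  have hB : ∀ i a, B (i+1) (gmapFun d i a) = gmapFun d' i (B i a) := by
    rintro i ⟨j, x⟩
    show (⟨σ j, E j (i+1) ((d j).2.map i x)⟩ : GT d' (i+1)) = ⟨σ j, (d' (σ j)).2.map i (E j i x)⟩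
    exact congrArg (Sigma.mk (σ j)) (hE j i x)
  let Q : ∀ i, GQ d i ≃ GQ d' i := fun i =>
    Quotient.congr (B i) (fun a b =>
      or_congr Iff.rfl ⟨fun h => congrArg _ h, fun h => (B i).injective h⟩)
  have hQmk : ∀ i a, Q i (Quotient.mk _ a) = Quotient.mk _ (B i a) := fun i a => rfl
  refine ofTypes_iso _ _ _ _ _ _ _ (fun i => (Q i).trans (Fintype.equivFin _)) (fun i x => ?_)
  induction x using Quotient.inductionOn with | h a =>
  show Fintype.equivFin _ (Q (i+1) (gmap d i (Quotient.mk _ a))) = (glue d' hs' hn').map i _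
  simp only [glue, ofTypes, Equiv.trans_apply, Equiv.symm_apply_apply]
  congr 1
  rw [gmap_mk, hQmk]
  show _ = gmap d' i ((Fintype.equivFin (GQ d' i)).symm ((Fintype.equivFin (GQ d' i)) (Q i (Quotient.mk _ a))))
  rw [Equiv.symm_apply_apply, hQmk, gmap_mk, hB]

end Glue


lemma FChain.fin_subsingleton {k n : ℕ} (c : FChain k n) {i : ℕ} (h : k ≤ i) :
    Subsingleton (Fin (c.size i)) := by
  rw [c.size_of_ge h]; infer_instance

lemma bij_helper {α β : Sort*} [Subsingleton α] [Subsingleton β] (ne : Nonempty α)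
    (f : α → β) : Bijective f :=
  ⟨fun a b _ => Subsingleton.elim a b,
   fun y => ⟨Classical.choice ne, Subsingleton.elim _ _⟩⟩

noncomputable def dfib {l n : ℕ} (c : FChain (l+1) n) : Fin (c.size l) → Σ m : ℕ, FChain l m :=
  fun j => ⟨_, fiberChain c j⟩

lemma GQ_subsingleton {l s : ℕ} (d : Fin s → Σ m : ℕ, FChain l m) {i : ℕ} (h : l < i) :
    Subsingleton (GQ d i) := by
  constructor
  intro q q'
  induction q using Quotient.inductionOn with | h a =>
  induction q' using Quotient.inductionOn with | h b =>
  exact Quotient.sound (Or.inl h)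

section GlueFiber

variable {l n : ℕ} (c : FChain (l+1) n)

/-- Underlying function from glued fibers back to the chain. -/
noncomputable def guFun (i : ℕ) : GT (dfib c) i → Fin (c.size i) :=
  fun a => ((Fintype.equivFin (Fb c a.1 i)).symm a.2).1

lemma guFun_resp (i : ℕ) : ∀ a b : GT (dfib c) i,
    (gsetoid (dfib c) i).r a b → guFun c i a = guFun c i b := by
  rintro a b (h | rfl)
  · have := c.fin_subsingleton (show l + 1 ≤ i by omega)
    exact Subsingleton.elim _ _
  · rfl

noncomputable def guQ (i : ℕ) : GQ (dfib c) i → Fin (c.size i) :=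
  Quotient.lift (guFun c i) (guFun_resp c i)

lemma guQ_bij (hs : 0 < c.size l) (i : ℕ) : Bijective (guQ c i) := by
  rcases le_or_gt i l with hi | hi
  · constructor
    · intro q q'
      induction q using Quotient.inductionOn with | h a =>
      induction q' using Quotient.inductionOn with | h b =>
      intro hab
      obtain ⟨j₁, y₁⟩ := a
      obtain ⟨j₂, y₂⟩ := b
      have hxa := ((Fintype.equivFin (Fb c j₁ i)).symm y₁).2 hi
      have hxb := ((Fintype.equivFin (Fb c j₂ i)).symm y₂).2 hi
      have hval : ((Fintype.equivFin (Fb c j₁ i)).symm y₁).1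
          = ((Fintype.equivFin (Fb c j₂ i)).symm y₂).1 := hab
      have hj : j₁ = j₂ := by rw [← hxa, ← hxb, hval]
      subst hj
      have : ((Fintype.equivFin (Fb c j₁ i)).symm y₁)
          = ((Fintype.equivFin (Fb c j₁ i)).symm y₂) := Subtype.ext hval
      have hy : y₁ = y₂ := by
        have := congrArg (Fintype.equivFin (Fb c j₁ i)) this
        exact (Fintype.equivFin (Fb c j₁ i)).symm.injective ((Fintype.equivFin (Fb c j₁ i)).injective this)
      rw [hy]
    · intro z
      refine ⟨Quotient.mk _ ⟨c.proj l i z, Fintype.equivFin _ (⟨z, fun _ => rfl⟩ : Fb c (c.proj l i z) i)⟩, ?_⟩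
      show guFun c i _ = z
      unfold guFun
      exact congrArg Subtype.val (Equiv.symm_apply_apply _ _)
  · haveI h1 := GQ_subsingleton (dfib c) hi
    haveI h2 := c.fin_subsingleton (show l + 1 ≤ i by omega)
    exact bij_helper (α := GQ (dfib c) i)
      ⟨Quotient.mk _ (Classical.choice (nonempty_GT _ hs i))⟩ (guQ c i)

lemma glue_fiber_iso (hs : 0 < c.size l) (hn : ∑ j, (dfib c j).1 = n) :
    (glue (dfib c) hs hn).Iso c := by
  refine ofTypes_iso _ _ _ _ _ _ _
    (fun i => Equiv.ofBijective (guQ c i) (guQ_bij c hs i)) (fun i x => ?_)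
  induction x using Quotient.inductionOn with | h a =>
  show guQ c (i+1) (gmap (dfib c) i (Quotient.mk _ a)) = c.map i (guQ c i (Quotient.mk _ a))
  rw [gmap_mk]
  show guFun c (i+1) (gmapFun (dfib c) i a) = c.map i (guFun c i a)
  obtain ⟨j, y⟩ := a
  show ((Fintype.equivFin (Fb c j (i+1))).symm ((fiberChain c j).map i y)).1
      = c.map i (((Fintype.equivFin (Fb c j i)).symm y).1)
  have : (fiberChain c j).map i y
      = Fintype.equivFin _ (fbMap c j i ((Fintype.equivFin (Fb c j i)).symm y)) := rfl
  rw [this]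
  simp
  rfl

end GlueFiber


/-! ### Transport helpers -/

lemma sigma_transport {α : Type} {β : α → Type} {a b : Σ x, β x} {c : α}
    (ha : a.1 = c) (hb : b.1 = c) (h : ha ▸ a.2 = hb ▸ b.2) : a = b := by
  obtain ⟨a1, a2⟩ := a
  obtain ⟨b1, b2⟩ := b
  dsimp at ha hb
  subst ha; subst hb
  simpa using h

lemma transport_snd {α : Type} {β : α → Type} {a b : Σ x, β x} (hab : a = b) {c : α}
    (ha : a.1 = c) (hb : b.1 = c) : ha ▸ a.2 = hb ▸ b.2 := by
  subst hab; rfl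

lemma transport_map {l s : ℕ} (d : Fin s → Σ m : ℕ, FChain l m) {j₁ j₀ : Fin s}
    (h : j₁ = j₀) (i : ℕ) (x : Fin ((d j₁).2.size i)) :
    (h ▸ ((d j₁).2.map i x) : Fin ((d j₀).2.size (i+1))) = (d j₀).2.map i (h ▸ x) := by
  subst h; rfl

/-! ### Fibers of a glued chain -/

section FiberGlue

variable {l s : ℕ} (d : Fin s → Σ m : ℕ, FChain l m) (hs : 0 < s)
  {n : ℕ} (hn : ∑ j, (d j).1 = n)

def topEquiv : GT d l ≃ Fin s where
  toFun a := a.1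
  invFun j := ⟨j, ⟨0, FChain.size_pos _ _⟩⟩
  left_inv := by
    rintro ⟨j, x⟩
    haveI : Subsingleton (Fin ((d j).2.size l)) := (d j).2.fin_subsingleton le_rfl
    exact congrArg (Sigma.mk j) (Subsingleton.elim _ _)
  right_inv := fun j => rfl

noncomputable def gβ : Fin ((glue d hs hn).size l) ≃ Fin s :=
  ((Fintype.equivFin (GQ d l)).symm.trans (gqEquiv d le_rfl)).trans (topEquiv d)

lemma glue_proj {i : ℕ} (hi : i ≤ l) (a : GT d i) :
    (glue d hs hn).proj l i (Fintype.equivFin (GQ d i) (Quotient.mk _ a))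
      = Fintype.equivFin (GQ d l) (Quotient.mk _ ⟨a.1, (d a.1).2.proj l i a.2⟩) := by
  have neGQ : Nonempty (GQ d l) := ⟨Quotient.mk _ (Classical.choice (nonempty_GT d hs l))⟩
  -- step 1 : from GQ to the glued chain
  have step1 := tproj_nat (gmap d) (glue d hs hn).map
    (fun i => Fintype.equivFin (GQ d i)) (fun i q => by
      show _ = (glue d hs hn).map i _
      simp [glue, ofTypes])
    neGQ ⟨⟨0, (glue d hs hn).size_pos l⟩⟩ i hi (Quotient.mk _ a)
  -- step 2 : from the component chain to GQ
  have step2 := tproj_nat (d a.1).2.map (gmap d)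
    (fun i x => (Quotient.mk _ ⟨a.1, x⟩ : GQ d i)) (fun i x => rfl)
    ⟨⟨0, FChain.size_pos _ l⟩⟩ neGQ i hi a.2
  show tproj (glue d hs hn).map l _ i _ = _
  rw [← step1]
  congr 1
  show tproj (gmap d) l neGQ i (Quotient.mk _ a) = _
  have ha : (Quotient.mk (gsetoid d i) a) = Quotient.mk _ (⟨a.1, a.2⟩ : GT d i) := by
    rw [Sigma.eta]
  rw [ha, ← step2]
  rfl


variable (j' : Fin ((glue d hs hn).size l))

noncomputable def aZero : GT d l := gqEquiv d le_rfl ((Fintype.equivFin (GQ d l)).symm j')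

lemma mk_aZero : Quotient.mk (gsetoid d l) (aZero d hs hn j')
    = (Fintype.equivFin (GQ d l)).symm j' :=
  Equiv.symm_apply_apply (gqEquiv d le_rfl) _

lemma fb_glue_fst {i : ℕ} (h : i ≤ l) (x : Fb (glue d hs hn) j' i) :
    (gqEquiv d h ((Fintype.equivFin (GQ d i)).symm x.1)).1 = gβ d hs hn j' := by
  set aa := gqEquiv d h ((Fintype.equivFin (GQ d i)).symm x.1) with haa
  have hx1 : x.1 = Fintype.equivFin (GQ d i) (Quotient.mk _ aa) := by
    rw [show (Quotient.mk _ aa : GQ d i) = (Fintype.equivFin (GQ d i)).symm x.1 from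
      Equiv.symm_apply_apply (gqEquiv d h) _]
    exact (Equiv.apply_symm_apply _ _).symm
  have hcond := x.2 h
  rw [hx1, glue_proj d hs hn h aa] at hcond
  have hj' : Fintype.equivFin (GQ d l) (Quotient.mk _ (aZero d hs hn j')) = j' := by
    rw [mk_aZero]; exact Equiv.apply_symm_apply _ _
  have h2 : Quotient.mk (gsetoid d l) ⟨aa.1, (d aa.1).2.proj l i aa.2⟩
      = Quotient.mk _ (aZero d hs hn j') :=
    (Fintype.equivFin (GQ d l)).injective (hcond.trans hj'.symm)
  have h3 : (⟨aa.1, (d aa.1).2.proj l i aa.2⟩ : GT d l) = aZero d hs hn j' := by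
    have h4 := congrArg (gqEquiv d le_rfl) h2
    rwa [gqEquiv_mk, gqEquiv_mk] at h4
  exact congrArg Sigma.fst h3

noncomputable def fibGlueFun (i : ℕ) (x : Fb (glue d hs hn) j' i) :
    Fin ((d (gβ d hs hn j')).2.size i) :=
  if h : i ≤ l then
    fb_glue_fst d hs hn j' h x ▸ (gqEquiv d h ((Fintype.equivFin (GQ d i)).symm x.1)).2
  else ⟨0, FChain.size_pos _ _⟩

lemma fibGlueFun_bij (i : ℕ) : Bijective (fibGlueFun d hs hn j' i) := by
  rcases le_or_gt i l with h | h
  · constructor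
    · intro x y hxy
      simp only [fibGlueFun, dif_pos h] at hxy
      have hab := sigma_transport (fb_glue_fst d hs hn j' h x) (fb_glue_fst d hs hn j' h y) hxy
      have h1 := (Fintype.equivFin (GQ d i)).symm.injective ((gqEquiv d h).injective hab)
      exact Subtype.ext h1
    · intro y
      have hcond : i ≤ l → (glue d hs hn).proj l i
          (Fintype.equivFin (GQ d i) (Quotient.mk _ (⟨gβ d hs hn j', y⟩ : GT d i))) = j' := by
        intro _
        rw [glue_proj d hs hn h (⟨gβ d hs hn j', y⟩ : GT d i)]
        have h4 : (⟨(⟨gβ d hs hn j', y⟩ : GT d i).1,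
            (d (⟨gβ d hs hn j', y⟩ : GT d i).1).2.proj l i
              (⟨gβ d hs hn j', y⟩ : GT d i).2⟩ : GT d l) = aZero d hs hn j' := by
          haveI : Subsingleton (Fin ((d (gβ d hs hn j')).2.size l)) :=
            (d (gβ d hs hn j')).2.fin_subsingleton le_rfl
          exact congrArg (Sigma.mk (gβ d hs hn j')) (Subsingleton.elim _ _)
        rw [h4, mk_aZero]
        exact Equiv.apply_symm_apply _ _
      refine ⟨⟨Fintype.equivFin (GQ d i) (Quotient.mk _ (⟨gβ d hs hn j', y⟩ : GT d i)), hcond⟩, ?_⟩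
      simp only [fibGlueFun, dif_pos h]
      have haa : gqEquiv d h ((Fintype.equivFin (GQ d i)).symm
          (Fintype.equivFin (GQ d i) (Quotient.mk _ (⟨gβ d hs hn j', y⟩ : GT d i))))
          = (⟨gβ d hs hn j', y⟩ : GT d i) := by
        rw [Equiv.symm_apply_apply]
        exact gqEquiv_mk d h _
      exact transport_snd haa (fb_glue_fst d hs hn j' h
        ⟨Fintype.equivFin (GQ d i) (Quotient.mk _ (⟨gβ d hs hn j', y⟩ : GT d i)), hcond⟩) rfl
  · haveI h1 := fb_subsingleton (glue d hs hn) j' h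
    haveI h2 := (d (gβ d hs hn j')).2.fin_subsingleton (le_of_lt h)
    exact bij_helper
      ⟨⟨⟨0, (glue d hs hn).size_pos i⟩, fun hle => absurd hle (by omega)⟩⟩ _

lemma fiber_glue_iso : (fiberChain (glue d hs hn) j').Iso (d (gβ d hs hn j')).2 := by
  refine ofTypes_iso _ _ _ _ _ _ _
    (fun i => Equiv.ofBijective _ (fibGlueFun_bij d hs hn j' i)) (fun i x => ?_)
  show fibGlueFun d hs hn j' (i+1) (fbMap (glue d hs hn) j' i x)
      = (d (gβ d hs hn j')).2.map i (fibGlueFun d hs hn j' i x)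
  rcases le_or_gt (i+1) l with h | h
  · have hi : i ≤ l := by omega
    simp only [fibGlueFun, dif_pos h, dif_pos hi]
    set aa := gqEquiv d hi ((Fintype.equivFin (GQ d i)).symm x.1) with haadef
    have hmkaa : (Quotient.mk _ aa : GQ d i) = (Fintype.equivFin (GQ d i)).symm x.1 :=
      Equiv.symm_apply_apply (gqEquiv d hi) _
    have haa' : gqEquiv d h ((Fintype.equivFin (GQ d (i+1))).symm
        ((fbMap (glue d hs hn) j' i x).1)) = gmapFun d i aa := by
      have hfb : (fbMap (glue d hs hn) j' i x).1 = (glue d hs hn).map i x.1 := rfl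
      have hmap : (glue d hs hn).map i x.1
          = Fintype.equivFin (GQ d (i+1)) (gmap d i ((Fintype.equivFin (GQ d i)).symm x.1)) := by
        simp [glue, ofTypes]
      rw [hfb, hmap, Equiv.symm_apply_apply, ← hmkaa, gmap_mk]
      exact gqEquiv_mk d h _
    refine (transport_snd haa' _
      (show (gmapFun d i aa).1 = gβ d hs hn j' from fb_glue_fst d hs hn j' hi x)).trans ?_
    exact transport_map d (fb_glue_fst d hs hn j' hi x) i aa.2
  · haveI := (d (gβ d hs hn j')).2.fin_subsingleton (show l ≤ i+1 by omega)
    exact Subsingleton.elim _ _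

lemma Fc_glue : Fc (glue d hs hn)
    = Multiset.map (fun j => Quot.mk (ChainRel l) (d j)) Finset.univ.val := by
  rw [Fc]
  have key : ∀ j', (Quot.mk (ChainRel l) ⟨_, fiberChain (glue d hs hn) j'⟩
      : Quot (ChainRel l)) = Quot.mk _ (d (gβ d hs hn j')) := by
    intro j'
    refine Quot.sound ?_
    show (fiberChain (glue d hs hn) j').Iso _
    exact fiber_glue_iso d hs hn j'
  rw [funext key]
  have h3 : (Finset.univ.val : Multiset (Fin ((glue d hs hn).size l))).map
        (fun j' => Quot.mk (ChainRel l) (d (gβ d hs hn j')))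
      = ((Finset.univ.val : Multiset (Fin ((glue d hs hn).size l))).map (gβ d hs hn)).map
        (fun j => Quot.mk (ChainRel l) (d j)) := by
    rw [Multiset.map_map]; rfl
  rw [h3]
  congr 1
  simp

end FiberGlue


/-! ### Permutation extraction -/

lemma exists_equiv_of_map_univ_eq {α : Type*} {s t : ℕ} (f : Fin s → α) (g : Fin t → α)
    (h : Multiset.map f Finset.univ.val = Multiset.map g Finset.univ.val) :
    ∃ σ : Fin s ≃ Fin t, ∀ j, f j = g (σ j) := by
  classical
  have hcard : ∀ q : α,
      Fintype.card {j : Fin s // f j = q} = Fintype.card {i : Fin t // g i = q} := by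
    intro q
    have hcnt := congrArg (Multiset.count q) h
    rw [Multiset.count_map, Multiset.count_map] at hcnt
    have e : ∀ {m : ℕ} (u : Fin m → α) [inst : DecidablePred fun x : Fin m => u x = q],
        Fintype.card {x : Fin m // u x = q}
          = Multiset.card (Multiset.filter (fun a => q = u a) Finset.univ.val) := by
      intro m u inst
      rw [Fintype.card_subtype, Finset.card_def, Finset.filter_val]
      exact congrArg Multiset.card (Multiset.filter_congr fun x _ => eq_comm)
    rw [e f, e g, hcnt]
  refine ⟨Equiv.ofFiberEquiv (fun q => Fintype.equivOfCardEq (hcard q)), fun j => ?_⟩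
  exact (Equiv.ofFiberEquiv_map (fun q => Fintype.equivOfCardEq (hcard q)) j).symm

lemma multiset_map_univ {α : Type*} {s : ℕ} (f : Fin s → α) :
    Multiset.map f Finset.univ.val = ↑(List.ofFn f) := by
  rw [Fin.univ_def]
  show Multiset.map f ↑(List.finRange s) = _
  rw [Multiset.map_coe, ← List.ofFn_eq_map]

/-! ### Assembly -/

section Main

variable {l n : ℕ}

lemma leafCount_out {q : Quot (ChainRel l)} : (Quot.out q).1 = leafCount l q := by
  conv_rhs => rw [← Quot.out_eq q]
  rfl

noncomputable def Phimap :
    Quot (fun c d : FChain (l+1) n => c.Iso d) →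
      {M : Multiset (Quot (ChainRel l)) // (M.map (leafCount l)).sum = n} :=
  Quot.lift (fun c => ⟨Fc c, Fc_sum c⟩) (fun _ _ h => Subtype.ext (Fc_iso_invariant h))

lemma toList_pos (M : Multiset (Quot (ChainRel l)))
    (hM : (M.map (leafCount l)).sum = n) (hn : 1 ≤ n) : 0 < M.toList.length := by
  rcases Nat.eq_zero_or_pos M.toList.length with h | h
  · exfalso
    have h0 : M = 0 := by
      rw [← Multiset.toList_eq_nil]
      exact List.length_eq_zero_iff.mp h
    rw [h0] at hM
    simp at hM
    omega
  · exact h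

lemma map_sum_toList (M : Multiset (Quot (ChainRel l)))
    (hM : (M.map (leafCount l)).sum = n) :
    ∑ j : Fin M.toList.length, ((M.toList.get j).out : Σ m : ℕ, FChain l m).1 = n := by
  calc ∑ j : Fin M.toList.length, ((M.toList.get j).out).1
      = ∑ j : Fin M.toList.length, leafCount l (M.toList.get j) :=
        Finset.sum_congr rfl (fun j _ => leafCount_out)
    _ = (List.ofFn (fun j => leafCount l (M.toList.get j))).sum := List.sum_ofFn.symm
    _ = (M.toList.map (leafCount l)).sum := by
        conv_rhs => rw [← List.ofFn_get M.toList, List.map_ofFn]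
        rfl
    _ = (M.map (leafCount l)).sum := by
        rw [← Multiset.coe_toList M, Multiset.map_coe, Multiset.sum_coe, Multiset.coe_toList]
    _ = n := hM

noncomputable def Psimap (hn : 1 ≤ n) :
    {M : Multiset (Quot (ChainRel l)) // (M.map (leafCount l)).sum = n} →
      Quot (fun c d : FChain (l+1) n => c.Iso d) := fun Mh =>
  Quot.mk _ (glue (fun j => (Mh.1.toList.get j).out)
    (toList_pos Mh.1 Mh.2 hn) (map_sum_toList Mh.1 Mh.2))

lemma Phimap_Psimap (hn : 1 ≤ n) (Mh : {M : Multiset (Quot (ChainRel l)) //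
    (M.map (leafCount l)).sum = n}) : Phimap (Psimap hn Mh) = Mh := by
  obtain ⟨M, hM⟩ := Mh
  refine Subtype.ext ?_
  show Fc (glue _ _ _) = M
  rw [Fc_glue, multiset_map_univ]
  have h1 : (fun j => Quot.mk (ChainRel l) ((M.toList.get j).out)) = fun j => M.toList.get j :=
    funext fun j => Quot.out_eq _
  rw [h1, List.ofFn_get, Multiset.coe_toList]

lemma Psimap_Phimap (hn : 1 ≤ n) (q : Quot (fun c d : FChain (l+1) n => c.Iso d)) :
    Psimap hn (Phimap q) = q := by
  induction q using Quot.ind with | mk c =>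
  apply Quot.sound
  show FChain.Iso _ c
  set M : Multiset (Quot (ChainRel l)) := Fc c with hMdef
  have hmaps : Multiset.map (fun j => Quot.mk (ChainRel l) (dfib c j)) Finset.univ.val
      = Multiset.map (fun j => Quot.mk (ChainRel l) ((M.toList.get j).out)) Finset.univ.val := by
    have h2 : Multiset.map (fun j => Quot.mk (ChainRel l) ((M.toList.get j).out))
        Finset.univ.val = M := by
      rw [multiset_map_univ]
      have h1 : (fun j => Quot.mk (ChainRel l) ((M.toList.get j).out))
          = fun j => M.toList.get j := funext fun j => Quot.out_eq _
      rw [h1, List.ofFn_get, Multiset.coe_toList]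
    rw [h2, hMdef]
    rfl
  obtain ⟨σ, hσ⟩ := exists_equiv_of_map_univ_eq _ _ hmaps
  have hpt : ∀ j, ChainRel l (dfib c j) ((M.toList.get (σ j)).out) :=
    fun j => chainRel_mk_eq_iff.mp (hσ j)
  have hpt' : ∀ j, ChainRel l ((M.toList.get j).out) (dfib c (σ.symm j)) := by
    intro j
    have h3 := hpt (σ.symm j)
    rw [Equiv.apply_symm_apply] at h3
    exact (chainRel_equivalence l).symm h3
  refine FChain.Iso.trans ?_ (glue_fiber_iso c (c.size_pos l) (sum_card_fb c))
  exact glue_iso_glue _ (dfib c) σ.symm hpt'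
    (toList_pos M (Phimap (Quot.mk _ c)).2 hn) (c.size_pos l)
    (map_sum_toList M (Phimap (Quot.mk _ c)).2) (sum_card_fb c)

end Main


/-- For k ≥ 2 and n ≥ 1, Φ(k,n) equals the number of finite multisets of
isomorphism classes of fission chains of slope ≤ k−1 whose total number of
leaves is n: the sequence Φ(k,·) is the Euler transform of Φ(k−1,·). -/
theorem PhiBig_eq_card_multisets (k n : ℕ) (hk : 2 ≤ k) (hn : 1 ≤ n) :
    PhiBig k n =
      Nat.card {M : Multiset (Quot (ChainRel (k-1))) //
        (M.map (leafCount (k-1))).sum = n} := by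
  obtain ⟨l, rfl⟩ : ∃ l, k = l + 1 := ⟨k - 1, by omega⟩
  exact Nat.card_congr ⟨Phimap, Psimap hn, Psimap_Phimap hn, Phimap_Psimap hn⟩
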